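/- Let p ∈ (R^2)^n be a configuration and define v = (0,…,0, b^T, 0,…,0)^T ∈ R^{2n}, placing a unit vector b in the block of index j. If vertex j has exactly one neighbor i and b = b_ji(p), then the velocity v leaves the directions of all bearings b_uv(p) between adjacent vertices instantaneously unchanged: the derivative of b_uv along v is zero for every edge (u,v) ≠ (j,i), and the derivative of b_ji along v is P(b_ji) b_ji / ‖p_i − p_j‖ = 0. Hence v is an infinitesimal motion preserving all signed angles, and v is not a linear combination of uniform translations, the scaling motion p, and the rotation motion (I_n ⊗ R(π/2))p when n ≥ 3 and p is non-degenerate. -/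
import Mathlib
open Matrix Real

noncomputable def Rot (θ : ℝ) : Matrix (Fin 2) (Fin 2) ℝ :=
  !![Real.cos θ, -Real.sin θ; Real.sin θ, Real.cos θ]

noncomputable def Proj (b : Fin 2 → ℝ) : Matrix (Fin 2) (Fin 2) ℝ :=
  1 - Matrix.vecMulVec b b

noncomputable def unitize (x : Fin 2 → ℝ) : Fin 2 → ℝ :=
  (Real.sqrt (x ⬝ᵥ x))⁻¹ • x

noncomputable def signedAngle (a b : Fin 2 → ℝ) : ℝ :=
  if 0 ≤ b ⬝ᵥ (Rot (π/2) *ᵥ a) then Real.arccos (b ⬝ᵥ a)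
  else 2*π - Real.arccos (b ⬝ᵥ a)

lemma dot_pos {x : Fin 2 → ℝ} (hx : x ≠ 0) : 0 < x ⬝ᵥ x := by
  have h : x 0 ≠ 0 ∨ x 1 ≠ 0 := by
    by_contra h
    push_neg at h
    exact hx (funext fun k => by fin_cases k <;> simp [h.1, h.2])
  simp only [dotProduct, Fin.sum_univ_two]
  rcases h with h | h <;>
    nlinarith [mul_self_pos.mpr h, mul_self_nonneg (x 0), mul_self_nonneg (x 1)]

lemma unitize_ne_zero {x : Fin 2 → ℝ} (hx : x ≠ 0) : unitize x ≠ 0 := by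
  have hs := dot_pos hx
  exact smul_ne_zero (inv_ne_zero (by positivity)) hx

lemma unitize_unit {x : Fin 2 → ℝ} (hx : x ≠ 0) : unitize x ⬝ᵥ unitize x = 1 := by
  have hs := dot_pos hx
  have h1 : Real.sqrt (x ⬝ᵥ x) * Real.sqrt (x ⬝ᵥ x) = x ⬝ᵥ x := Real.mul_self_sqrt hs.le
  simp only [unitize, smul_dotProduct, dotProduct_smul, smul_eq_mul]
  rw [← mul_assoc, ← mul_inv, h1]
  exact inv_mul_cancel₀ hs.ne'

lemma vecMulVec_mulVec' (b c : Fin 2 → ℝ) :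
    Matrix.vecMulVec b b *ᵥ c = (b ⬝ᵥ c) • b := by
  funext k
  simp [Matrix.mulVec, Matrix.vecMulVec_apply, dotProduct, Fin.sum_univ_two]
  ring

lemma proj_unitize {x : Fin 2 → ℝ} (hx : x ≠ 0) : Proj (unitize x) *ᵥ unitize x = 0 := by
  rw [Proj, Matrix.sub_mulVec, Matrix.one_mulVec, vecMulVec_mulVec', unitize_unit hx,
    one_smul, sub_self]

lemma unitize_neg (x : Fin 2 → ℝ) : unitize (-x) = -unitize x := by
  simp [unitize]

lemma Proj_neg (b : Fin 2 → ℝ) : Proj (-b) = Proj b := by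
  unfold Proj
  congr 1
  ext u w
  simp [Matrix.vecMulVec_apply]

lemma rot_half_pi_apply (x : Fin 2 → ℝ) :
    Rot (π/2) *ᵥ x = ![-(x 1), x 0] := by
  funext k
  fin_cases k <;>
    simp [Rot, Matrix.mulVec, dotProduct, Fin.sum_univ_two, Real.cos_pi_div_two,
      Real.sin_pi_div_two]

theorem degree_one_vertex_nontrivial_motion {V : Type*} [Fintype V] [DecidableEq V]
    (G : SimpleGraph V) (p : V → Fin 2 → ℝ) (hinj : Function.Injective p)
    (j i : V) (hadj : G.Adj j i) (huniq : ∀ k, G.Adj j k → k = i)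
    (hn : 3 ≤ Fintype.card V) (hnd : ¬ Collinear ℝ (Set.range p))
    (v : V → Fin 2 → ℝ)
    (hv : v = fun u => if u = j then unitize (p i - p j) else 0) :
    (∀ u w, G.Adj u w → Proj (unitize (p w - p u)) *ᵥ (v w - v u) = 0) ∧
    v ∉ Submodule.span ℝ
      ({p, fun u => Rot (π/2) *ᵥ p u, fun _ => ![1,0], fun _ => ![0,1]} :
        Set (V → Fin 2 → ℝ)) := by
  have hji : j ≠ i := hadj.ne
  have hpij : p i - p j ≠ 0 := sub_ne_zero.mpr fun h => hji (hinj h.symm)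
  constructor
  · intro u w huw
    by_cases hu : u = j
    · have hw : w = i := huniq w (hu ▸ huw)
      have hwj : w ≠ j := by rw [hw]; exact Ne.symm hji
      have h1 : v w - v u = -(unitize (p w - p u)) := by
        rw [hv]
        simp only [if_neg hwj, if_pos hu, zero_sub, hw, hu]
        simp [Ne.symm hji]
      have h2 : p w - p u ≠ 0 := by rw [hw, hu]; exact hpij
      rw [h1, Matrix.mulVec_neg, proj_unitize h2, neg_zero]
    · by_cases hw : w = j
      · have hu' : u = i := huniq u (hw ▸ huw.symm)
        have huj : u ≠ j := by rw [hu']; exact Ne.symm hji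
        have h1 : v w - v u = unitize (p i - p j) := by
          rw [hv]
          simp only [if_pos hw, if_neg huj, sub_zero]
        have h2 : p w - p u = -(p i - p j) := by rw [hw, hu']; abel
        rw [h1, h2, unitize_neg, Proj_neg, proj_unitize hpij]
      · have h1 : v w - v u = 0 := by simp [hv, hu, hw]
        rw [h1, Matrix.mulVec_zero]
  · intro hmem
    obtain ⟨a, z1, hz1, hv1⟩ := Submodule.mem_span_insert.mp hmem
    obtain ⟨c, z2, hz2, hz1e⟩ := Submodule.mem_span_insert.mp hz1
    obtain ⟨d, z3, hz3, hz2e⟩ := Submodule.mem_span_insert.mp hz2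
    obtain ⟨e, hz3e⟩ := Submodule.mem_span_singleton.mp hz3
    have hcomp : ∀ u k, v u k = a * p u k + c * (Rot (π/2) *ᵥ p u) k
        + d * (![1,0] : Fin 2 → ℝ) k + e * (![0,1] : Fin 2 → ℝ) k := by
      intro u k
      rw [hv1, hz1e, hz2e, ← hz3e]
      simp only [Pi.add_apply, Pi.smul_apply, smul_eq_mul]
      ring
    have hE : ∀ u : V, u ≠ j →
        (a * p u 0 - c * p u 1 + d = 0 ∧ a * p u 1 + c * p u 0 + e = 0) := by
      intro u hu
      have h0 := hcomp u 0
      have h1 := hcomp u 1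
      rw [rot_half_pi_apply] at h0 h1
      simp [hv, hu] at h0 h1
      constructor <;> linarith
    have h2 : 1 < (Finset.univ.erase j).card := by
      rw [Finset.card_erase_of_mem (Finset.mem_univ j), Finset.card_univ]
      omega
    obtain ⟨u1, hu1m, u2, hu2m, hne⟩ := Finset.one_lt_card.mp h2
    have hu1 : u1 ≠ j := (Finset.mem_erase.mp hu1m).1
    have hu2 : u2 ≠ j := (Finset.mem_erase.mp hu2m).1
    obtain ⟨hE10, hE11⟩ := hE u1 hu1
    obtain ⟨hE20, hE21⟩ := hE u2 hu2
    set w0 := p u1 0 - p u2 0 with hw0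
    set w1 := p u1 1 - p u2 1 with hw1
    have hwne : p u1 - p u2 ≠ 0 := sub_ne_zero.mpr fun h => hne (hinj h)
    have hpos : 0 < w0 * w0 + w1 * w1 := by
      have := dot_pos hwne
      simpa [dotProduct, Fin.sum_univ_two, hw0, hw1, Pi.sub_apply] using this
    have hA : a * (w0 * w0 + w1 * w1) = 0 := by
      linear_combination w0 * (hE10 - hE20) + w1 * (hE11 - hE21)
    have hC : c * (w0 * w0 + w1 * w1) = 0 := by
      linear_combination (-w1) * (hE10 - hE20) + w0 * (hE11 - hE21)
    have ha : a = 0 := by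
      rcases mul_eq_zero.mp hA with h | h
      · exact h
      · exact absurd h hpos.ne'
    have hc : c = 0 := by
      rcases mul_eq_zero.mp hC with h | h
      · exact h
      · exact absurd h hpos.ne'
    have hd : d = 0 := by rw [ha, hc] at hE10; linarith
    have he : e = 0 := by rw [ha, hc] at hE11; linarith
    have hvj : v j = 0 := by
      funext k
      have := hcomp j k
      rw [ha, hc, hd, he] at this
      simpa using this
    have : unitize (p i - p j) = 0 := by
      rw [hv] at hvj
      simpa using hvj
    exact unitize_ne_zero hpij this
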